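/- arXiv:1805.09051 — 5 statements merged into one kernel-verified Lean document; each statement's English description precedes it below -/
import Mathlib

section
/- Let X^n be uniform on {0,1}^n and Y^n the output of a memoryless BSC with crossover probability δ ∈ (0,1/2) with input X^n. With f(y^n) = y_1 (Dictator), the ratio G_s(X^n | f(Y^n)) / G_s(X^n) converges as n → ∞ to (1-2δ)·2^{-s} + 2δ. -/
open Finset Filter

/-- Joint pmf of a uniform input `X^n` on `{0,1}^n` and the output `Y^n` of a memoryless
BSC with crossover probability `δ`. -/
noncomputable def bscJoint (δ : ℝ) (n : ℕ) (x y : Fin n → Bool) : ℝ :=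
  (2 : ℝ) ^ (-(n : ℝ)) * ∏ i : Fin n, (if y i = x i then 1 - δ else δ)

/-- The minimal conditional `s`-th guessing moment `G_s(X^n | f(Y^n))`: the infimum over all
guessing strategies (an ordering of `{0,1}^n` for each value of the one-bit help `f(Y^n)`)
of the `s`-th moment of the guessing time. -/
noncomputable def GcondBSC (s δ : ℝ) (n : ℕ) (f : (Fin n → Bool) → Bool) : ℝ :=
  sInf {m : ℝ | ∃ g : Bool → ((Fin n → Bool) ≃ Fin (2 ^ n)),
    m = ∑ x : Fin n → Bool, ∑ y : Fin n → Bool,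
      bscJoint δ n x y * (((g (f y) x : ℕ) + 1 : ℝ)) ^ s}

/-- The unconditional guessing moment `G_s(X^n)` of a uniform vector on `{0,1}^n`. -/
noncomputable def Gunif (s : ℝ) (n : ℕ) : ℝ :=
  (2 : ℝ) ^ (-(n : ℝ)) * ∑ i ∈ Finset.Icc (1 : ℕ) (2 ^ n), (i : ℝ) ^ s

open Asymptotics Topology

/-! Given `Y₁ = b`, the posterior of `Xⁿ` is proportional to `1 - δ` on the half-cube `{x₁ = b}`
and to `δ` off it, so a guessing order `σ` costs, up to the factor `2⁻ⁿ`,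
`δ ∑ₓ (σ x + 1)ˢ + (1 - 2δ) ∑_{x₁ = b} (σ x + 1)ˢ`. The first sum does not depend on `σ`, and
since `δ ≤ 1/2` the best order guesses the half-cube first. With `S m = ∑_{i ≤ m} iˢ` this gives
`G_s(Xⁿ | Y₁) / G_s(Xⁿ) = 2δ + 2(1 - 2δ) S(2ⁿ⁻¹) / S(2ⁿ)`, and comparison with `∫ xˢ` yields
`S m ~ m^(s+1) / (s+1)`, so the last ratio tends to `2^(-(s+1))`. -/

theorem sum_range_card_le_sum_of_monotone {M : Type*} [AddCommMonoid M] [PartialOrder M]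
    [IsOrderedAddMonoid M] {V : ℕ → M} (hV : Monotone V) (T : Finset ℕ) :
    ∑ i ∈ range #T, V i ≤ ∑ i ∈ T, V i := by
  induction T using Finset.induction_on_max with
  | empty => simp
  | insert a T hlt ih =>
    have haT : a ∉ T := fun h => (hlt a h).false
    have hcard : #T ≤ a := by
      simpa using card_le_card (fun i hi => mem_range.2 (hlt i hi) : T ⊆ range a)
    rw [card_insert_of_notMem haT, sum_range_succ, sum_insert haT, add_comm]
    exact add_le_add (hV hcard) ih

theorem sum_range_card_le_sum_comp {M ι : Type*} [AddCommMonoid M] [PartialOrder M]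
    [IsOrderedAddMonoid M] {V : ℕ → M} (hV : Monotone V) {f : ι → ℕ} {S : Finset ι}
    (hf : Set.InjOn f S) :
    ∑ i ∈ range #S, V i ≤ ∑ x ∈ S, V (f x) := by
  classical
  simpa [card_image_of_injOn hf, sum_image hf] using
    sum_range_card_le_sum_of_monotone hV (S.image f)

theorem exists_equiv_fin_sum_comp_eq {M α : Type*} [AddCommMonoid M] [Fintype α]
    {N : ℕ} (hN : Fintype.card α = N) (S : Finset α) (V : ℕ → M) :
    ∃ σ : α ≃ Fin N, ∑ x ∈ S, V (σ x) = ∑ i ∈ range #S, V i := by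
  classical
  have hS : #S + (N - #S) = N := by have := S.card_le_univ; omega
  let e₁ : S ≃ Fin #S := S.equivFin
  let e₂ : {x // x ∉ S} ≃ Fin (N - #S) :=
    Fintype.equivFinOfCardEq (by rw [Fintype.card_subtype_compl, Fintype.card_coe, hN])
  let σ : α ≃ Fin N := (Equiv.sumCompl (· ∈ S)).symm.trans
    ((e₁.sumCongr e₂).trans (finSumFinEquiv.trans (finCongr hS)))
  refine ⟨σ, ?_⟩
  have hσ : ∀ x : S, (σ x : ℕ) = e₁ x := fun x => by
    simp [σ, Equiv.sumCompl_symm_apply_of_pos, x.2]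
  rw [← sum_attach, ← Fin.sum_univ_eq_sum_range]
  exact Fintype.sum_equiv e₁ _ _ fun x => by rw [hσ]

theorem Fintype.sum_ite_mul {α R : Type*} [Fintype α] [CommRing R] (p : α → Prop)
    [DecidablePred p] (a c : R) (f : α → R) :
    ∑ x, (if p x then a else c) * f x = c * ∑ x, f x + (a - c) * ∑ x with p x, f x := by
  rw [sum_filter, mul_sum, mul_sum, ← sum_add_distrib]
  exact Fintype.sum_congr _ _ fun x => by split_ifs <;> ring

theorem sum_prod_mul_apply_zero {R β : Type*} [CommRing R] [Fintype β] {n : ℕ}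
    (w : Fin (n + 1) → β → R) (k : β → R) :
    ∑ y : Fin (n + 1) → β, (∏ i, w i (y i)) * k (y 0) =
      (∑ c, w 0 c * k c) * ∏ i : Fin n, ∑ c, w i.succ c := by
  classical
  let w' := Function.update w 0 fun c => w 0 c * k c
  calc ∑ y : Fin (n + 1) → β, (∏ i, w i (y i)) * k (y 0)
      = ∑ y : Fin (n + 1) → β, ∏ i, w' i (y i) := by
        refine Fintype.sum_congr _ _ fun y => ?_
        simp only [w', Fin.prod_univ_succ, Function.update_self,
          Function.update_of_ne (Fin.succ_ne_zero _)]
        ring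
    _ = ∏ i, ∑ c, w' i c := (Fintype.prod_sum w').symm
    _ = _ := by
        simp only [w', Fin.prod_univ_succ, Function.update_self,
          Function.update_of_ne (Fin.succ_ne_zero _)]

noncomputable def rpowSum (s : ℝ) (m : ℕ) : ℝ := ∑ i ∈ range m, ((i : ℝ) + 1) ^ s

theorem monotone_add_one_rpow {s : ℝ} (hs : 0 ≤ s) : Monotone fun i : ℕ => ((i : ℝ) + 1) ^ s :=
  fun _ _ hij => Real.rpow_le_rpow (by positivity) (by gcongr) hs

theorem rpowSum_eq_sum_comp_equiv (s : ℝ) {α : Type*} [Fintype α] {N : ℕ} (σ : α ≃ Fin N) :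
    rpowSum s N = ∑ x, (((σ x : ℕ) : ℝ) + 1) ^ s := by
  rw [rpowSum, ← Fin.sum_univ_eq_sum_range (fun i => ((i : ℝ) + 1) ^ s)]
  exact (σ.sum_comp fun i => (((i : ℕ) : ℝ) + 1) ^ s).symm

theorem le_rpowSum {s : ℝ} (hs : 0 ≤ s) (m : ℕ) :
    (m : ℝ) ^ (s + 1) / (s + 1) ≤ rpowSum s m := by
  have hmono : MonotoneOn (fun x : ℝ => x ^ s) (Set.Icc 0 (0 + m)) :=
    fun a ha b _ hab => Real.rpow_le_rpow ha.1 hab hs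
  have h := hmono.integral_le_sum
  rw [zero_add, integral_rpow (Or.inl (by linarith)), Real.zero_rpow (by linarith), sub_zero] at h
  simpa [rpowSum] using h

theorem rpowSum_le {s : ℝ} (hs : 0 ≤ s) (m : ℕ) :
    rpowSum s m ≤ ((m : ℝ) + 1) ^ (s + 1) / (s + 1) := by
  have hmono : MonotoneOn (fun x : ℝ => (x + 1) ^ s) (Set.Icc 0 (0 + m)) :=
    fun a ha b _ hab => Real.rpow_le_rpow (by linarith [ha.1]) (by linarith) hs
  have h := hmono.sum_le_integral
  rw [zero_add, intervalIntegral.integral_comp_add_right (fun x => x ^ s),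
    integral_rpow (Or.inl (by linarith))] at h
  calc rpowSum s m ≤ (((m : ℝ) + 1) ^ (s + 1) - (0 + 1) ^ (s + 1)) / (s + 1) := by
        simpa [rpowSum] using h
    _ ≤ ((m : ℝ) + 1) ^ (s + 1) / (s + 1) := by
        gcongr
        simp

theorem isEquivalent_rpowSum {s : ℝ} (hs : 0 ≤ s) :
    (fun m : ℕ => rpowSum s m) ~[atTop] fun m => (m : ℝ) ^ (s + 1) / (s + 1) := by
  refine isEquivalent_of_tendsto_one ?_
  have hs1 : 0 < s + 1 := by linarith
  have hupper : Tendsto (fun m : ℕ => (1 + 1 / (m : ℝ)) ^ (s + 1)) atTop (𝓝 1) := by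
    simpa using ((tendsto_const_nhds (x := (1 : ℝ))).add
      tendsto_one_div_atTop_nhds_zero_nat).rpow_const (p := s + 1) (Or.inr hs1.le)
  refine tendsto_of_tendsto_of_tendsto_of_le_of_le' tendsto_const_nhds hupper ?_ ?_
  all_goals filter_upwards [eventually_ge_atTop 1] with m hm
  all_goals have hm' : (0 : ℝ) < m := by exact_mod_cast hm
  · rw [Pi.div_apply, le_div_iff₀ (by positivity), one_mul]
    exact le_rpowSum hs m
  · rw [Pi.div_apply, div_le_iff₀ (by positivity),
      show 1 + 1 / (m : ℝ) = (m + 1) / m by field_simp, Real.div_rpow (by positivity) hm'.le]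
    calc rpowSum s m ≤ ((m : ℝ) + 1) ^ (s + 1) / (s + 1) := rpowSum_le hs m
      _ = _ := by field_simp

theorem tendsto_rpowSum_two_pow_div {s : ℝ} (hs : 0 ≤ s) :
    Tendsto (fun n => rpowSum s (2 ^ n) / rpowSum s (2 ^ (n + 1))) atTop
      (𝓝 ((2 : ℝ) ^ (-(s + 1)))) := by
  have h2 : Tendsto (fun n : ℕ => 2 ^ n) atTop atTop :=
    tendsto_pow_atTop_atTop_of_one_lt one_lt_two
  have hequiv := ((isEquivalent_rpowSum hs).comp_tendsto h2).div
    ((isEquivalent_rpowSum hs).comp_tendsto (h2.comp (tendsto_add_atTop_nat 1)))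
  refine hequiv.symm.tendsto_nhds (tendsto_const_nhds.congr fun n => ?_)
  have hs1 : s + 1 ≠ 0 := by linarith
  simp only [Function.comp_apply, Pi.div_apply, pow_succ]
  push_cast
  rw [div_div_div_cancel_right₀ hs1, Real.mul_rpow (by positivity) (by positivity),
    div_mul_cancel_left₀ (by positivity), Real.rpow_neg (by positivity)]

theorem Gunif_eq (s : ℝ) (n : ℕ) : Gunif s n = (2 : ℝ) ^ (-(n : ℝ)) * rpowSum s (2 ^ n) := by
  rw [Gunif, rpowSum, ← Finset.Ico_add_one_right_eq_Icc, sum_Ico_eq_sum_range]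
  simp [add_comm]

theorem sum_bscJoint_mul_apply_zero (δ : ℝ) {n : ℕ} (x : Fin (n + 1) → Bool) (k : Bool → ℝ) :
    ∑ y, bscJoint δ (n + 1) x y * k (y 0) =
      (2 : ℝ) ^ (-((n + 1 : ℕ) : ℝ)) * ∑ b, (if b = x 0 then 1 - δ else δ) * k b := by
  have hrow : ∀ i : Fin n, ∑ c : Bool, (if c = x i.succ then 1 - δ else δ) = 1 := fun i => by
    cases x i.succ <;> simp
  simp_rw [bscJoint, mul_assoc, ← mul_sum]
  rw [sum_prod_mul_apply_zero (fun i c => if c = x i then 1 - δ else δ),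
    Fintype.prod_congr _ _ hrow, prod_const_one, mul_one]

theorem sum_sum_bscJoint_mul_apply_zero (δ : ℝ) {n : ℕ}
    (h : Bool → (Fin (n + 1) → Bool) → ℝ) :
    ∑ x, ∑ y, bscJoint δ (n + 1) x y * h (y 0) x =
      (2 : ℝ) ^ (-((n + 1 : ℕ) : ℝ)) * ∑ b, ∑ x, (if b = x 0 then 1 - δ else δ) * h b x := by
  rw [Fintype.sum_congr _ _ fun x => sum_bscJoint_mul_apply_zero δ x (h · x), ← mul_sum, sum_comm]

theorem card_filter_apply_zero_eq (n : ℕ) (b : Bool) :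
    #{x : Fin (n + 1) → Bool | b = x 0} = 2 ^ n := by
  have h := Fintype.card_filter_piFinset_const_eq_of_mem univ (0 : Fin (n + 1)) (mem_univ b)
  rw [Fintype.piFinset_univ] at h
  simpa [eq_comm] using h

theorem le_sum_dictator_weight_mul {s δ : ℝ} (hs : 0 ≤ s) (hδ : δ ≤ 1 / 2) {n : ℕ} (b : Bool)
    (σ : (Fin (n + 1) → Bool) ≃ Fin (2 ^ (n + 1))) :
    δ * rpowSum s (2 ^ (n + 1)) + (1 - 2 * δ) * rpowSum s (2 ^ n) ≤
      ∑ x, (if b = x 0 then 1 - δ else δ) * (((σ x : ℕ) : ℝ) + 1) ^ s := by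
  have hS := sum_range_card_le_sum_comp (monotone_add_one_rpow hs)
    (S := {x : Fin (n + 1) → Bool | b = x 0}) (Fin.val_injective.comp σ.injective).injOn
  rw [card_filter_apply_zero_eq] at hS
  have hδ' : 0 ≤ 1 - 2 * δ := by linarith
  rw [Fintype.sum_ite_mul, ← rpowSum_eq_sum_comp_equiv, rpowSum,
    show 1 - δ - δ = 1 - 2 * δ by ring]
  gcongr
  exact hS

theorem exists_sum_dictator_weight_mul_eq (s δ : ℝ) (n : ℕ) (b : Bool) :
    ∃ σ : (Fin (n + 1) → Bool) ≃ Fin (2 ^ (n + 1)),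
      ∑ x, (if b = x 0 then 1 - δ else δ) * (((σ x : ℕ) : ℝ) + 1) ^ s =
        δ * rpowSum s (2 ^ (n + 1)) + (1 - 2 * δ) * rpowSum s (2 ^ n) := by
  obtain ⟨σ, hσ⟩ := exists_equiv_fin_sum_comp_eq (N := 2 ^ (n + 1)) (by simp)
    {x : Fin (n + 1) → Bool | b = x 0} (fun i => ((i : ℝ) + 1) ^ s)
  refine ⟨σ, ?_⟩
  rw [Fintype.sum_ite_mul, hσ, card_filter_apply_zero_eq, ← rpowSum_eq_sum_comp_equiv, rpowSum,
    rpowSum]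
  ring

theorem GcondBSC_dictator_eq {s δ : ℝ} (hs : 0 ≤ s) (hδ : δ ≤ 1 / 2) (n : ℕ) :
    GcondBSC s δ (n + 1) (fun y => y 0) = (2 : ℝ) ^ (-((n + 1 : ℕ) : ℝ)) *
      (2 * (δ * rpowSum s (2 ^ (n + 1)) + (1 - 2 * δ) * rpowSum s (2 ^ n))) := by
  have hcost : ∀ g : Bool → ((Fin (n + 1) → Bool) ≃ Fin (2 ^ (n + 1))),
      ∑ x, ∑ y, bscJoint δ (n + 1) x y * (((g (y 0) x : ℕ) + 1 : ℝ)) ^ s =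
        (2 : ℝ) ^ (-((n + 1 : ℕ) : ℝ)) *
          ∑ b, ∑ x, (if b = x 0 then 1 - δ else δ) * (((g b x : ℕ) : ℝ) + 1) ^ s :=
    fun g => sum_sum_bscJoint_mul_apply_zero δ fun b x => (((g b x : ℕ) : ℝ) + 1) ^ s
  refine IsLeast.csInf_eq ⟨?_, ?_⟩
  · choose g hg using exists_sum_dictator_weight_mul_eq s δ n
    refine ⟨g, ?_⟩
    simp only [hcost, hg, Fintype.sum_bool]
    ring
  · rintro _ ⟨g, rfl⟩
    rw [hcost, Fintype.sum_bool, two_mul]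
    gcongr <;> exact le_sum_dictator_weight_mul hs hδ _ _

theorem GcondBSC_dictator_div_Gunif {s δ : ℝ} (hs : 0 ≤ s) (hδ : δ ≤ 1 / 2) (n : ℕ) :
    GcondBSC s δ (n + 1) (fun y => y 0) / Gunif s (n + 1) =
      2 * δ + 2 * (1 - 2 * δ) * (rpowSum s (2 ^ n) / rpowSum s (2 ^ (n + 1))) := by
  have hT : 0 < rpowSum s (2 ^ (n + 1)) :=
    (by positivity : (0 : ℝ) < _).trans_le (le_rpowSum hs _)
  rw [GcondBSC_dictator_eq hs hδ, Gunif_eq, mul_div_mul_left _ _ (by positivity)]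
  field_simp

theorem dictator_guessing_efficiency_general (s δ : ℝ) (hs : 0 < s) (hδ : δ < 1 / 2) :
    Tendsto (fun n : ℕ => GcondBSC s δ (n + 1) (fun y => y 0) / Gunif s (n + 1)) atTop
      (nhds ((1 - 2 * δ) * (2 : ℝ) ^ (-s) + 2 * δ)) := by
  have hlimit : (1 - 2 * δ) * (2 : ℝ) ^ (-s) + 2 * δ =
      2 * δ + 2 * (1 - 2 * δ) * (2 : ℝ) ^ (-(s + 1)) := by
    rw [neg_add, Real.rpow_add two_pos, Real.rpow_neg_one]
    ring
  rw [hlimit]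
  refine (((tendsto_rpowSum_two_pow_div hs.le).const_mul _).const_add _).congr fun n => ?_
  exact (GcondBSC_dictator_div_Gunif hs.le hδ.le n).symm

/-- The Dictator function `f(y^n) = y_1` achieves guessing efficiency
`(1-2δ)·2^{-s} + 2δ` over the BSC. -/
theorem dictator_guessing_efficiency (s δ : ℝ) (hs : 0 < s) (hδ0 : 0 < δ) (hδ : δ < 1 / 2) :
    Tendsto (fun n : ℕ => GcondBSC s δ (n + 1) (fun y => y 0) / Gunif s (n + 1)) atTop
      (nhds ((1 - 2 * δ) * (2 : ℝ) ^ (-s) + 2 * δ)) :=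
  dictator_guessing_efficiency_general s δ hs hδ
end

section
/- Let 0 ≤ δ ≤ 1/2 and n, w be naturals with w ≤ n-1. Let r_n(w) = P(Bin(w, 1-δ) + Bin(n-w, δ) > n/2), where the two binomial random variables are independent. Then r_n(w+1) ≥ r_n(w); i.e. r_n is nondecreasing in w. -/
/-!
Write `r_n(w)` as `E[f(X + Y)]` with `X ~ Bin(w, 1 - δ)`, `Y ~ Bin(n - w, δ)` and `f` the
monotone indicator of `s > n / 2`. Conditioning on one trial of each binomial (Pascal's rule),
raising `w` by one replaces a `δ`-coin by a `(1 - δ)`-coin, which changes the conditional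
expectation by `(1 - 2δ) (f(s + 1) - f(s)) ≥ 0`.
-/

open Finset

/-- `P(Bin(m,p) = k) = C(m,k) p^k (1-p)^{m-k}`. -/
noncomputable def binomPMF (m : ℕ) (p : ℝ) (k : ℕ) : ℝ :=
  (m.choose k : ℝ) * p ^ k * (1 - p) ^ (m - k)

/-- `r_n(w) = P(Bin(w,1-δ) + Bin(n-w,δ) > n/2)` for independent binomials. -/
noncomputable def rMaj (n : ℕ) (δ : ℝ) (w : ℕ) : ℝ :=
  ∑ k ∈ Finset.range (w + 1), ∑ j ∈ Finset.range (n - w + 1),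
    if n < 2 * (k + j) then binomPMF w (1 - δ) k * binomPMF (n - w) δ j else 0

lemma binomPMF_nonneg {p : ℝ} (hp₀ : 0 ≤ p) (hp₁ : p ≤ 1) (m k : ℕ) : 0 ≤ binomPMF m p k := by
  have : 0 ≤ 1 - p := sub_nonneg.mpr hp₁
  unfold binomPMF
  positivity

lemma binomPMF_eq_zero_of_lt {m k : ℕ} (h : m < k) (p : ℝ) : binomPMF m p k = 0 := by
  simp [binomPMF, Nat.choose_eq_zero_of_lt h]

lemma binomPMF_succ_zero (m : ℕ) (p : ℝ) : binomPMF (m + 1) p 0 = (1 - p) * binomPMF m p 0 := by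
  simp [binomPMF, pow_succ, mul_comm]

lemma binomPMF_succ_succ (m k : ℕ) (p : ℝ) :
    binomPMF (m + 1) p (k + 1) = p * binomPMF m p k + (1 - p) * binomPMF m p (k + 1) := by
  unfold binomPMF
  rw [Nat.choose_succ_succ, Nat.succ_sub_succ, Nat.cast_add]
  rcases Nat.lt_or_ge k m with hk | hk
  · rw [show m - k = m - (k + 1) + 1 by omega]
    ring
  · rw [Nat.choose_eq_zero_of_lt (by omega : m < k + 1), Nat.sub_eq_zero_of_le hk]
    ring

noncomputable def binomExpect (m : ℕ) (p : ℝ) (F : ℕ → ℝ) : ℝ :=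
  ∑ k ∈ range (m + 1), binomPMF m p k * F k

lemma binomExpect_linear_combination (m : ℕ) (p a b : ℝ) (F G : ℕ → ℝ) :
    binomExpect m p (fun k => a * F k + b * G k) = a * binomExpect m p F + b * binomExpect m p G := by
  simp only [binomExpect, mul_sum, ← sum_add_distrib]
  exact sum_congr rfl fun _ _ => by ring

lemma binomExpect_mono {p : ℝ} (hp₀ : 0 ≤ p) (hp₁ : p ≤ 1) (m : ℕ) {F G : ℕ → ℝ} (h : F ≤ G) :
    binomExpect m p F ≤ binomExpect m p G :=
  sum_le_sum fun k _ => mul_le_mul_of_nonneg_left (h k) (binomPMF_nonneg hp₀ hp₁ m k)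

lemma binomExpect_succ (m : ℕ) (p : ℝ) (F : ℕ → ℝ) :
    binomExpect (m + 1) p F = binomExpect m p (fun k => (1 - p) * F k + p * F (k + 1)) := by
  have shift : ∑ k ∈ range (m + 1), binomPMF m p k * F k
      = ∑ k ∈ range (m + 1), binomPMF m p (k + 1) * F (k + 1) + binomPMF m p 0 * F 0 := by
    rw [← sum_range_succ' (fun k => binomPMF m p k * F k), sum_range_succ _ (m + 1),
      binomPMF_eq_zero_of_lt (Nat.lt_succ_self m), zero_mul, add_zero]
  rw [binomExpect_linear_combination]
  simp only [binomExpect]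
  rw [sum_range_succ', shift]
  simp only [binomPMF_succ_succ, binomPMF_succ_zero, add_mul, sum_add_distrib, mul_add, mul_sum,
    mul_assoc]
  ring

/-- `E[f(X + Y)]` for independent `X ~ Bin(a, 1 - δ)` and `Y ~ Bin(b, δ)`. -/
noncomputable def binomSumExpect (a b : ℕ) (δ : ℝ) (f : ℕ → ℝ) : ℝ :=
  binomExpect a (1 - δ) fun k => binomExpect b δ fun j => f (k + j)

lemma rMaj_eq_binomSumExpect (n : ℕ) (δ : ℝ) (w : ℕ) :
    rMaj n δ w = binomSumExpect w (n - w) δ fun s => if n < 2 * s then 1 else 0 := by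
  simp only [rMaj, binomSumExpect, binomExpect, mul_sum]
  refine sum_congr rfl fun k _ => sum_congr rfl fun j _ => ?_
  split_ifs <;> ring

lemma binomSumExpect_le_succ_left {δ : ℝ} (hδ₀ : 0 ≤ δ) (hδ : δ ≤ 1 / 2) {f : ℕ → ℝ}
    (hf : Monotone f) (a b : ℕ) :
    binomSumExpect a (b + 1) δ f ≤ binomSumExpect (a + 1) b δ f := by
  simp only [binomSumExpect, binomExpect_succ a, binomExpect_succ b,
    ← binomExpect_linear_combination]
  refine binomExpect_mono (by linarith) (by linarith) a fun k => ?_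
  refine binomExpect_mono hδ₀ (by linarith) b fun j => ?_
  have hstep : f (k + j) ≤ f (k + j + 1) := hf (Nat.le_succ _)
  rw [← add_assoc, add_right_comm k 1 j]
  linarith [mul_nonneg (by linarith : 0 ≤ 1 - 2 * δ) (sub_nonneg.mpr hstep)]

lemma monotone_ite_lt_two_mul (n : ℕ) :
    Monotone fun s : ℕ => if n < 2 * s then (1 : ℝ) else 0 := by
  intro s t hst
  dsimp only
  split_ifs <;> first | omega | norm_num

/-- `r_n(w)` is nondecreasing in the Hamming weight `w`, for `0 ≤ δ ≤ 1/2`. -/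
theorem rMaj_monotone (n w : ℕ) (δ : ℝ) (hδ0 : 0 ≤ δ) (hδ : δ ≤ 1 / 2) (hw : w + 1 ≤ n) :
    rMaj n δ w ≤ rMaj n δ (w + 1) := by
  obtain ⟨m, hm⟩ : ∃ m, n - w = m + 1 := ⟨n - w - 1, by omega⟩
  rw [rMaj_eq_binomSumExpect, rMaj_eq_binomSumExpect, hm, show n - (w + 1) = m by omega]
  exact binomSumExpect_le_succ_left hδ0 hδ (monotone_ite_lt_two_mul n) w m
end

section
/- As λ → 0+, Z(λ)·s·λ^{1/s}/Γ(1/s) → 1, where Z(λ) = ∑_{i=1}^∞ exp(-λ i^s) and s > 0 is fixed. -/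
/-!
Since `x ↦ exp (-λ x ^ s)` is decreasing on `[0, ∞)` with value `1` at `0`, the integral test
squeezes `Z(λ)` between `I(λ) - 1` and `I(λ)`, where
`I(λ) = ∫₀^∞ exp (-λ x ^ s) dx = Γ(1/s) / (s λ^{1/s})`. Dividing by `I(λ)`, which tends to `∞`
as `λ → 0⁺`, gives the limit.
-/

open Filter MeasureTheory Set Real Topology

/-- `Z(λ)`, with the positive integers written as `i + 1` for `i : ℕ`. -/
noncomputable def partitionFunction (s l : ℝ) : ℝ :=
  ∑' i : ℕ, exp (-l * ((i : ℝ) + 1) ^ s)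

theorem AntitoneOn.integral_sub_le_tsum_add_one {f : ℝ → ℝ} (anti : AntitoneOn f (Ici 0))
    (integrable : IntegrableOn f (Ioi 0)) (nonneg : ∀ t ∈ Ioi 0, 0 ≤ f t) :
    (∫ x in Ioi 0, f x) - f 0 ≤ ∑' n : ℕ, f (n + 1 : ℕ) := by
  have summable := anti.summable_of_integrableOn_Ioi_zero integrable nonneg
  have h := anti.integral_le_tsum summable nonneg
  rw [summable.tsum_eq_zero_add, Nat.cast_zero] at h
  linarith

lemma antitoneOn_exp_neg_mul_rpow {l s : ℝ} (hl : 0 ≤ l) (hs : 0 ≤ s) :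
    AntitoneOn (fun x : ℝ => exp (-l * x ^ s)) (Ici 0) := fun x hx y _ hxy => by
  have := mul_le_mul_of_nonneg_left (rpow_le_rpow hx hxy hs) hl
  simp only [neg_mul, exp_le_exp]
  linarith

lemma integrableOn_exp_neg_mul_rpow {l s : ℝ} (hl : 0 < l) (hs : 0 < s) :
    IntegrableOn (fun x : ℝ => exp (-l * x ^ s)) (Ioi 0) := by
  simpa using integrableOn_rpow_mul_exp_neg_mul_rpow neg_one_lt_zero hs hl

lemma integral_exp_neg_mul_rpow_eq_inv {l s : ℝ} (hl : 0 < l) (hs : 0 < s) :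
    ∫ x in Ioi 0, exp (-l * x ^ s) = (s * l ^ (1 / s) / Gamma (1 / s))⁻¹ := by
  rw [integral_exp_neg_mul_rpow hs hl, Gamma_add_one (one_div_ne_zero hs.ne'), neg_div,
    rpow_neg hl.le]
  field_simp

theorem partitionFunction_mul_mem_Icc {l s : ℝ} (hl : 0 < l) (hs : 0 < s) :
    partitionFunction s l * (s * l ^ (1 / s) / Gamma (1 / s)) ∈
      Icc (1 - s * l ^ (1 / s) / Gamma (1 / s)) 1 := by
  set c := s * l ^ (1 / s) / Gamma (1 / s)
  have hc : 0 < c := by have := Gamma_pos_of_pos (one_div_pos.2 hs); positivity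
  have anti := antitoneOn_exp_neg_mul_rpow hl.le hs.le
  have integrable := integrableOn_exp_neg_mul_rpow hl hs
  have nonneg : ∀ t ∈ Ioi (0 : ℝ), 0 ≤ exp (-l * t ^ s) := fun _ _ => (exp_pos _).le
  have upper := anti.tsum_add_one_le_integral integrable nonneg
  have lower := anti.integral_sub_le_tsum_add_one integrable nonneg
  simp only [integral_exp_neg_mul_rpow_eq_inv hl hs, Nat.cast_add_one, zero_rpow hs.ne',
    mul_zero, exp_zero] at upper lower
  rw [← partitionFunction] at upper lower
  constructor
  · calc 1 - c = (c⁻¹ - 1) * c := by field_simp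
      _ ≤ partitionFunction s l * c := mul_le_mul_of_nonneg_right lower hc.le
  · calc partitionFunction s l * c ≤ c⁻¹ * c := mul_le_mul_of_nonneg_right upper hc.le
      _ = 1 := inv_mul_cancel₀ hc.ne'

/-- `Z(λ)·s·λ^{1/s}/Γ(1/s) → 1` as `λ → 0⁺`, where `Z(λ) = ∑_{i≥1} exp(-λ i^s)`. -/
theorem partition_function_asymptotic (s : ℝ) (hs : 0 < s) :
    Tendsto (fun l : ℝ =>
        (∑' i : ℕ, Real.exp (-l * ((i : ℝ) + 1) ^ s)) * s * l ^ (1 / s) / Real.Gamma (1 / s))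
      (nhdsWithin 0 (Set.Ioi 0)) (nhds 1) := by
  have hc : Tendsto (fun l : ℝ => s * l ^ (1 / s) / Gamma (1 / s)) (𝓝[>] 0) (𝓝 0) := by
    have := ((continuous_rpow_const (one_div_pos.2 hs).le).tendsto 0).const_mul s
      |>.div_const (Gamma (1 / s))
    rw [zero_rpow (one_div_pos.2 hs).ne', mul_zero, zero_div] at this
    exact tendsto_nhdsWithin_of_tendsto_nhds this
  have bounds : ∀ᶠ l in 𝓝[>] 0, partitionFunction s l * (s * l ^ (1 / s) / Gamma (1 / s)) ∈
      Icc (1 - s * l ^ (1 / s) / Gamma (1 / s)) 1 := by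
    filter_upwards [self_mem_nhdsWithin] with l hl using partitionFunction_mul_mem_Icc hl hs
  have squeeze := tendsto_of_tendsto_of_tendsto_of_le_of_le' (by simpa using hc.const_sub 1)
    tendsto_const_nhds (bounds.mono fun _ h => h.1) (bounds.mono fun _ h => h.2)
  simpa only [partitionFunction, mul_div_assoc, mul_assoc] using squeeze
end

section
/- Fix s > 0, and for λ > 0 let G(λ) = (∑_{i=1}^∞ i^s exp(-λ i^s)) / (∑_{i=1}^∞ exp(-λ i^s)). Then λ·s·G(λ) → 1 as λ → 0+. -/
/-!
Both series are Riemann sums of integrals that the `Γ` function evaluates: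
`A(λ) := ∫₀^∞ exp (-λ x^s) dx = Γ(1/s + 1) λ^(-1/s)` and `λ s ∫₀^∞ x^s exp (-λ x^s) dx = A(λ)`.
On each interval `[i, i + 1]` the term `F (i + 1)` differs from `∫ F` by at most the variation
`∫ |F'|` of `F` there. The total variation of `exp (-λ x^s)` is `1` and that of
`x^s exp (-λ x^s)` is at most `2 / λ`, so the denominator is `A(λ) + O(1)` and `λ s` times the
numerator is `A(λ) + O(s)`. Since `A(λ) → ∞` as `λ → 0⁺`, both quotients by `A(λ)` tend to `1`.
-/

open Filter MeasureTheory Set Real Topology Function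

section RiemannSum

variable {F F' : ℝ → ℝ}

theorem abs_sub_intervalIntegral_le_integral_abs_deriv {a : ℝ}
    (hF : ContinuousOn F (Icc a (a + 1))) (hderiv : ∀ x ∈ Ioo a (a + 1), HasDerivAt F (F' x) x)
    (hF' : IntervalIntegrable F' volume a (a + 1)) :
    |F (a + 1) - ∫ x in a..a + 1, F x| ≤ ∫ x in a..a + 1, |F' x| := by
  have hle : a ≤ a + 1 := by linarith
  have hvar : ∀ x ∈ Icc a (a + 1), |F (a + 1) - F x| ≤ ∫ y in a..a + 1, |F' y| := by
    intro x hx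
    rw [← intervalIntegral.integral_eq_sub_of_hasDerivAt_of_le hx.2
      (hF.mono (Icc_subset_Icc_left hx.1)) (fun y hy => hderiv y ⟨hx.1.trans_lt hy.1, hy.2⟩)
      (hF'.mono_set (uIcc_subset_uIcc_right (Icc_subset_uIcc hx)))]
    calc |∫ y in x..a + 1, F' y| ≤ ∫ y in x..a + 1, |F' y| :=
          intervalIntegral.abs_integral_le_integral_abs hx.2
      _ ≤ ∫ y in a..a + 1, |F' y| :=
          intervalIntegral.integral_mono_interval hx.1 hx.2 le_rfl
            (Eventually.of_forall fun y => abs_nonneg (F' y)) hF'.abs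
  calc |F (a + 1) - ∫ x in a..a + 1, F x| = |∫ x in a..a + 1, (F (a + 1) - F x)| := by
        rw [intervalIntegral.integral_sub intervalIntegrable_const
          (hF.intervalIntegrable_of_Icc hle)]
        simp
    _ ≤ (∫ y in a..a + 1, |F' y|) * |a + 1 - a| :=
        intervalIntegral.norm_integral_le_of_norm_le_const (f := fun x => F (a + 1) - F x)
          fun x hx => hvar x (Ioc_subset_Icc_self (by rwa [uIoc_of_le hle] at hx))
    _ = ∫ y in a..a + 1, |F' y| := by simp

theorem iUnion_Ioc_natCast_add_one : ⋃ i : ℕ, Ioc (i : ℝ) (i + 1) = Ioi 0 := by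
  refine Subset.antisymm (iUnion_subset fun i => ?_) fun x (hx : 0 < x) => ?_
  · exact fun x hx => (Nat.cast_nonneg i).trans_lt hx.1
  · have hceil : 1 ≤ ⌈x⌉₊ := Nat.one_le_iff_ne_zero.mpr (Nat.ceil_pos.mpr hx).ne'
    refine mem_iUnion.mpr ⟨⌈x⌉₊ - 1, ?_, ?_⟩ <;> push_cast [hceil]
    · linarith [Nat.ceil_lt_add_one hx.le]
    · linarith [Nat.le_ceil x]

theorem hasSum_intervalIntegral_natCast (hF : IntegrableOn F (Ioi 0)) :
    HasSum (fun i : ℕ => ∫ x in (i : ℝ)..i + 1, F x) (∫ x in Ioi 0, F x) := by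
  have hd : Pairwise (Disjoint on fun i : ℕ => Ioc (i : ℝ) (i + 1)) := by
    simpa using (Nat.mono_cast (α := ℝ)).pairwise_disjoint_on_Ioc_succ
  have h := hasSum_integral_iUnion (fun i : ℕ => measurableSet_Ioc) hd
    (iUnion_Ioc_natCast_add_one ▸ hF)
  rw [iUnion_Ioc_natCast_add_one] at h
  exact h.congr_fun fun i => intervalIntegral.integral_of_le (by linarith)

theorem abs_tsum_sub_integral_Ioi_le (hF : ContinuousOn F (Ici 0))
    (hderiv : ∀ x > 0, HasDerivAt F (F' x) x) (hFi : IntegrableOn F (Ioi 0))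
    (hF'i : IntegrableOn F' (Ioi 0)) :
    |∑' i : ℕ, F (i + 1) - ∫ x in Ioi 0, F x| ≤ ∫ x in Ioi 0, |F' x| := by
  set e : ℕ → ℝ := fun i => F (i + 1) - ∫ x in (i : ℝ)..i + 1, F x
  have he : ∀ i : ℕ, ‖e i‖ ≤ ∫ x in (i : ℝ)..i + 1, |F' x| := fun i =>
    abs_sub_intervalIntegral_le_integral_abs_deriv
      (hF.mono fun x hx => (Nat.cast_nonneg i).trans hx.1)
      (fun x hx => hderiv x ((Nat.cast_nonneg i).trans_lt hx.1))
      ((intervalIntegrable_iff_integrableOn_Ioc_of_le (by linarith)).mpr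
        (hF'i.mono_set fun x hx => (Nat.cast_nonneg i).trans_lt hx.1))
  have habs := hasSum_intervalIntegral_natCast hF'i.abs
  have hsum : HasSum (fun i : ℕ => F (i + 1)) ((∫ x in Ioi 0, F x) + ∑' i, e i) := by
    convert (hasSum_intervalIntegral_natCast hFi).add
      (Summable.of_norm_bounded habs.summable he).hasSum using 1
    ext i; simp [e]
  rw [hsum.tsum_eq, add_sub_cancel_left]
  exact tsum_of_norm_bounded habs he

end RiemannSum

theorem tendsto_div_nhds_one_of_abs_sub_le {α : Type*} {l : Filter α} {u v : α → ℝ} {c : ℝ}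
    (hv : Tendsto v l atTop) (h : ∀ᶠ x in l, |u x - v x| ≤ c) :
    Tendsto (fun x => u x / v x) l (𝓝 1) := by
  have hsmall : Tendsto (fun x => (u x - v x) / v x) l (𝓝 0) := by
    refine squeeze_zero_norm' (a := fun x => c / v x) ?_ (tendsto_const_nhds.div_atTop hv)
    filter_upwards [h, hv.eventually_gt_atTop 0] with x hx hvx
    rw [norm_div, Real.norm_of_nonneg hvx.le]
    exact div_le_div_of_nonneg_right hx hvx.le
  have hone : Tendsto (fun x => 1 + (u x - v x) / v x) l (𝓝 1) := by
    simpa using hsmall.const_add 1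
  refine hone.congr' ?_
  filter_upwards [hv.eventually_gt_atTop 0] with x hvx
  field_simp
  ring

section StretchedExponential

variable {s l : ℝ}

theorem integral_rpow_mul_sub_one_mul_exp_neg_mul_rpow (hs : 0 < s) (hl : 0 < l) {k : ℝ}
    (hk : 0 < k) :
    ∫ x in Ioi 0, x ^ (k * s - 1) * exp (-l * x ^ s) = Gamma k / (s * l ^ k) := by
  rw [integral_rpow_mul_exp_neg_mul_rpow hs (by nlinarith) hl, sub_add_cancel, neg_div,
    mul_div_cancel_right₀ k hs.ne', rpow_neg hl.le]
  field_simp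

theorem mul_integral_rpow_mul_exp_neg_mul_rpow (hs : 0 < s) (hl : 0 < l) :
    l * s * ∫ x in Ioi 0, x ^ s * exp (-l * x ^ s) = ∫ x in Ioi 0, exp (-l * x ^ s) := by
  have h := integral_rpow_mul_sub_one_mul_exp_neg_mul_rpow hs hl
    (add_pos (one_div_pos.mpr hs) one_pos)
  rw [show (1 / s + 1) * s - 1 = s by field_simp; ring] at h
  rw [h, integral_exp_neg_mul_rpow hs hl, rpow_add_one hl.ne', neg_div, rpow_neg hl.le]
  field_simp

theorem hasDerivAt_exp_neg_mul_rpow {x : ℝ} (hx : 0 < x) :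
    HasDerivAt (fun x => exp (-l * x ^ s)) (-(l * s) * (x ^ (s - 1) * exp (-l * x ^ s))) x := by
  refine (((hasDerivAt_rpow_const (Or.inl hx.ne')).const_mul (-l)).exp).congr_deriv ?_
  ring

theorem hasDerivAt_rpow_mul_exp_neg_mul_rpow {x : ℝ} (hx : 0 < x) :
    HasDerivAt (fun x => x ^ s * exp (-l * x ^ s))
      (s * (x ^ (s - 1) * exp (-l * x ^ s)) - l * s * (x ^ (2 * s - 1) * exp (-l * x ^ s))) x := by
  refine ((hasDerivAt_rpow_const (Or.inl hx.ne')).mul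
    (hasDerivAt_exp_neg_mul_rpow hx)).congr_deriv ?_
  rw [show 2 * s - 1 = s + (s - 1) by ring, rpow_add hx]
  ring

theorem abs_tsum_exp_neg_mul_rpow_sub_integral_le (hs : 0 < s) (hl : 0 < l) :
    |∑' i : ℕ, exp (-l * ((i : ℝ) + 1) ^ s) - ∫ x in Ioi 0, exp (-l * x ^ s)| ≤ 1 := by
  have hint := integrableOn_rpow_mul_exp_neg_mul_rpow (s := s - 1) (by linarith) hs hl
  calc _ ≤ ∫ x in Ioi 0, |-(l * s) * (x ^ (s - 1) * exp (-l * x ^ s))| :=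
        abs_tsum_sub_integral_Ioi_le (by fun_prop (disch := positivity))
          (fun x hx => hasDerivAt_exp_neg_mul_rpow hx)
          (by simpa using integrableOn_rpow_mul_exp_neg_mul_rpow (s := 0) (by norm_num) hs hl)
          (hint.const_mul _)
    _ = l * s * ∫ x in Ioi 0, x ^ (s - 1) * exp (-l * x ^ s) := by
        rw [← integral_const_mul]
        refine setIntegral_congr_fun measurableSet_Ioi fun x (hx : 0 < x) => ?_
        rw [abs_mul, abs_neg, abs_of_pos (by positivity), abs_of_pos (by positivity)]
    _ = 1 := by
        have h := integral_rpow_mul_sub_one_mul_exp_neg_mul_rpow hs hl one_pos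
        rw [one_mul] at h
        rw [h, Gamma_one, rpow_one]
        field_simp

theorem abs_tsum_rpow_mul_exp_neg_mul_rpow_sub_integral_le (hs : 0 < s) (hl : 0 < l) :
    |∑' i : ℕ, ((i : ℝ) + 1) ^ s * exp (-l * ((i : ℝ) + 1) ^ s) -
      ∫ x in Ioi 0, x ^ s * exp (-l * x ^ s)| ≤ 2 / l := by
  have h₁ := (integrableOn_rpow_mul_exp_neg_mul_rpow (s := s - 1) (by linarith) hs hl).const_mul s
  have h₂ := (integrableOn_rpow_mul_exp_neg_mul_rpow (s := 2 * s - 1) (by linarith) hs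
    hl).const_mul (l * s)
  have hΓ₁ := integral_rpow_mul_sub_one_mul_exp_neg_mul_rpow hs hl one_pos
  have hΓ₂ := integral_rpow_mul_sub_one_mul_exp_neg_mul_rpow hs hl two_pos
  rw [one_mul] at hΓ₁
  calc _ ≤ ∫ x in Ioi 0, |s * (x ^ (s - 1) * exp (-l * x ^ s)) -
          l * s * (x ^ (2 * s - 1) * exp (-l * x ^ s))| :=
        abs_tsum_sub_integral_Ioi_le (by fun_prop (disch := positivity))
          (fun x hx => hasDerivAt_rpow_mul_exp_neg_mul_rpow hx)
          (integrableOn_rpow_mul_exp_neg_mul_rpow (by linarith) hs hl) (h₁.sub h₂)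
    _ ≤ ∫ x in Ioi 0, (s * (x ^ (s - 1) * exp (-l * x ^ s)) +
          l * s * (x ^ (2 * s - 1) * exp (-l * x ^ s))) := by
        refine setIntegral_mono_on (h₁.sub h₂).abs (h₁.add h₂) measurableSet_Ioi
          fun x (hx : 0 < x) => (abs_sub _ _).trans_eq ?_
        rw [abs_of_pos (by positivity), abs_of_pos (by positivity)]
    _ = 2 / l := by
        rw [integral_add h₁ h₂, integral_const_mul, integral_const_mul, hΓ₁, hΓ₂, Gamma_one,
          Gamma_two, rpow_one, rpow_two]
        field_simp
        ring

theorem abs_mul_tsum_rpow_mul_exp_neg_mul_rpow_sub_integral_le (hs : 0 < s) (hl : 0 < l) :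
    |l * s * ∑' i : ℕ, ((i : ℝ) + 1) ^ s * exp (-l * ((i : ℝ) + 1) ^ s) -
      ∫ x in Ioi 0, exp (-l * x ^ s)| ≤ 2 * s := by
  rw [← mul_integral_rpow_mul_exp_neg_mul_rpow hs hl, ← mul_sub, abs_mul,
    abs_of_pos (by positivity)]
  calc l * s * _ ≤ l * s * (2 / l) := by
        gcongr; exact abs_tsum_rpow_mul_exp_neg_mul_rpow_sub_integral_le hs hl
    _ = 2 * s := by field_simp

end StretchedExponential

theorem tendsto_integral_exp_neg_mul_rpow_nhdsGT_zero {s : ℝ} (hs : 0 < s) :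
    Tendsto (fun l => ∫ x in Ioi 0, exp (-l * x ^ s)) (𝓝[>] 0) atTop := by
  have hpow := tendsto_rpow_neg_nhdsGT_zero (y := -1 / s) (by simpa [neg_div] using hs)
  refine (hpow.atTop_mul_const (Gamma_pos_of_pos (by positivity : 0 < 1 / s + 1))).congr' ?_
  filter_upwards [self_mem_nhdsWithin] with l (hl : 0 < l)
  rw [integral_exp_neg_mul_rpow hs hl]

/-- For the maximum-entropy distribution `P_λ(i) ∝ exp(-λ i^s)`, the guessing moment
`G(λ) = ∑ i^s P_λ(i)` satisfies `λ·s·G(λ) → 1` as `λ → 0⁺`. -/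
theorem maxent_guessing_moment_asymptotic (s : ℝ) (hs : 0 < s) :
    Tendsto (fun l : ℝ =>
        l * s * ((∑' i : ℕ, ((i : ℝ) + 1) ^ s * Real.exp (-l * ((i : ℝ) + 1) ^ s)) /
          (∑' i : ℕ, Real.exp (-l * ((i : ℝ) + 1) ^ s))))
      (nhdsWithin 0 (Set.Ioi 0)) (nhds 1) := by
  have hA := tendsto_integral_exp_neg_mul_rpow_nhdsGT_zero hs
  have hD := tendsto_div_nhds_one_of_abs_sub_le hA <| eventually_mem_nhdsWithin.mono
    fun l hl => abs_tsum_exp_neg_mul_rpow_sub_integral_le hs hl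
  have hN := tendsto_div_nhds_one_of_abs_sub_le hA <| eventually_mem_nhdsWithin.mono
    fun l hl => abs_mul_tsum_rpow_mul_exp_neg_mul_rpow_sub_integral_le hs hl
  have hND := hN.div hD one_ne_zero
  rw [div_one] at hND
  refine hND.congr' ?_
  filter_upwards [hA.eventually_gt_atTop 0] with l hl
  rw [Pi.div_apply, div_div_div_cancel_right₀ hl.ne', mul_div_assoc]
end

section
/- For any s > 0 there is a function ε(g) → 0 as g → ∞ such that every probability distribution P on the positive integers with finite s-th guessing moment G_s(P) = ∑_i P(σ(i)) i^s (where σ sorts probabilities decreasingly) satisfies H(P) ≤ log₂( (e^{1/s}/s)·s^{1/s}·G_s(P)^{1/s}·Γ(1/s) ) + ε(G_s(P)), where H(P) is the Shannon entropy in bits. -/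
open Filter

/-- Maximum-entropy bound: for any distribution `P` on the positive integers with atoms sorted
in decreasing order (so that `G_s(P) = ∑_i p_i i^s` is the minimal guessing moment),
`H(P) ≤ log₂((e^{1/s}/s)·s^{1/s}·G_s(P)^{1/s}·Γ(1/s)) + ε(G_s(P))` with `ε(g) → 0` as `g → ∞`. -/
theorem entropy_le_log_guessing_moment (s : ℝ) (hs : 0 < s) :
    ∃ ε : ℝ → ℝ, Tendsto ε atTop (nhds 0) ∧
      ∀ p : ℕ → ℝ, (∀ i, 0 ≤ p i) → Antitone p → (∑' i : ℕ, p i) = 1 →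
        Summable (fun i : ℕ => p i * ((i : ℝ) + 1) ^ s) →
        (-∑' i : ℕ, p i * Real.logb 2 (p i)) ≤
          Real.logb 2 ((Real.exp (1 / s) / s) * s ^ (1 / s) *
              (∑' i : ℕ, p i * ((i : ℝ) + 1) ^ s) ^ (1 / s) * Real.Gamma (1 / s)) +
            ε (∑' i : ℕ, p i * ((i : ℝ) + 1) ^ s) := by
  refine ⟨fun _ => 0, tendsto_const_nhds, ?_⟩
  intro p hnn _hant hsum1 hmom
  simp only [add_zero]
  set g : ℝ := ∑' i : ℕ, p i * ((i : ℝ) + 1) ^ s with hg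
  -- basic facts about p
  have hone_le : ∀ i : ℕ, (1 : ℝ) ≤ ((i : ℝ) + 1) ^ s := by
    intro i
    exact Real.one_le_rpow (by exact_mod_cast Nat.one_le_iff_ne_zero.mpr (by positivity)) hs.le
  have hple : ∀ i, p i ≤ p i * ((i : ℝ) + 1) ^ s := fun i =>
    le_mul_of_one_le_right (hnn i) (hone_le i)
  have hpsum : Summable p := Summable.of_nonneg_of_le hnn hple hmom
  have hg1 : (1 : ℝ) ≤ g := by
    rw [← hsum1]
    exact Summable.tsum_le_tsum hple hpsum hmom
  have hgpos : (0 : ℝ) < g := lt_of_lt_of_le one_pos hg1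
  have hple1 : ∀ i, p i ≤ 1 := by
    intro i
    rw [← hsum1]
    exact Summable.le_tsum hpsum i fun j _ => hnn j
  -- the max-entropy comparison distribution
  set b : ℝ := 1 / (s * g) with hbdef
  have hb : 0 < b := by positivity
  set q : ℕ → ℝ := fun i => Real.exp (-b * ((i : ℝ) + 1) ^ s) with hqdef
  have hq0 : ∀ i, 0 < q i := fun i => Real.exp_pos _
  set I : ℝ := b ^ (-1 / s) * Real.Gamma (1 / s + 1) with hIdef
  have hI : 0 < I := by
    apply mul_pos (Real.rpow_pos_of_pos hb _)
    exact Real.Gamma_pos_of_pos (by positivity)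
  -- the integral formula
  have hint : ∫ x in Set.Ioi (0 : ℝ), Real.exp (-b * x ^ s) = I :=
    integral_exp_neg_mul_rpow hs hb
  have hinteg : MeasureTheory.IntegrableOn (fun x : ℝ => Real.exp (-b * x ^ s))
      (Set.Ioi (0 : ℝ)) := by
    by_contra h
    rw [MeasureTheory.integral_undef h] at hint
    exact absurd hint.symm (ne_of_gt hI)
  have hFanti : AntitoneOn (fun x : ℝ => Real.exp (-b * x ^ s)) (Set.Ici (0 : ℝ)) := by
    intro x hx y hy hxy
    simp only
    apply Real.exp_le_exp.mpr
    have : x ^ s ≤ y ^ s := Real.rpow_le_rpow hx hxy hs.le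
    nlinarith
  -- partial sums of q are bounded by the integral I
  have hpartial : ∀ n : ℕ, ∑ i ∈ Finset.range n, q i ≤ I := by
    intro n
    have hanti : AntitoneOn (fun x : ℝ => Real.exp (-b * x ^ s))
        (Set.Icc (0 : ℝ) (0 + (n : ℕ))) := by
      apply hFanti.mono
      intro x hx
      exact hx.1
    have h1 := AntitoneOn.sum_le_integral hanti
    have h2 : ∑ i ∈ Finset.range n, q i
        = ∑ i ∈ Finset.range n, (fun x : ℝ => Real.exp (-b * x ^ s)) ((0 : ℝ) + ((i + 1 : ℕ) : ℝ)) := by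
      apply Finset.sum_congr rfl
      intro i _
      simp [hqdef]
    have h3 : ∫ x in (0 : ℝ)..(0 + (n : ℕ) : ℝ), Real.exp (-b * x ^ s)
        ≤ ∫ x in Set.Ioi (0 : ℝ), Real.exp (-b * x ^ s) := by
      rw [zero_add, intervalIntegral.integral_of_le (by positivity)]
      apply MeasureTheory.setIntegral_mono_set hinteg
      · filter_upwards with x using Real.exp_nonneg _
      · filter_upwards with x hx using hx.1
    rw [h2]
    calc _ ≤ _ := h1
      _ ≤ _ := h3
      _ = I := hint
  have hqsum : Summable q := summable_of_sum_range_le (fun i => (hq0 i).le) hpartial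
  set Z : ℝ := ∑' i, q i with hZdef
  have hZI : Z ≤ I := Real.tsum_le_of_sum_range_le (fun i => (hq0 i).le) hpartial
  have hZ : 0 < Z := lt_of_lt_of_le (hq0 0) (Summable.le_tsum hqsum 0 fun j _ => (hq0 j).le)
  -- the pointwise Gibbs bound
  set u : ℕ → ℝ := fun i =>
    p i * (b * ((i : ℝ) + 1) ^ s) + p i * Real.log Z + (q i / Z - p i) with hudef
  have hpoint : ∀ i, -(p i * Real.log (p i)) ≤ u i := by
    intro i
    rcases eq_or_lt_of_le (hnn i) with h | h
    · simp [hudef, ← h]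
      positivity
    · have h1 : Real.log (q i / (Z * p i)) ≤ q i / (Z * p i) - 1 :=
        Real.log_le_sub_one_of_pos (by positivity)
      have h2 : Real.log (q i / (Z * p i))
          = -(b * ((i : ℝ) + 1) ^ s) - (Real.log Z + Real.log (p i)) := by
        rw [Real.log_div (ne_of_gt (hq0 i)) (by positivity),
          Real.log_mul (ne_of_gt hZ) (ne_of_gt h)]
        simp only [hqdef]
        rw [Real.log_exp]
        ring
      rw [h2] at h1
      have h3 := mul_le_mul_of_nonneg_left h1 (hnn i)
      have h4 : p i * (q i / (Z * p i)) = q i / Z := by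
        field_simp
      simp only [hudef]
      nlinarith [h3, h4]
  have hfnn : ∀ i, 0 ≤ -(p i * Real.log (p i)) := by
    intro i
    rcases eq_or_lt_of_le (hnn i) with h | h
    · simp [← h]
    · have : Real.log (p i) ≤ 0 := Real.log_nonpos h.le (hple1 i)
      nlinarith
  -- summability of the upper bound
  have hsum_u1 : Summable (fun i => p i * (b * ((i : ℝ) + 1) ^ s)) := by
    have : (fun i => p i * (b * ((i : ℝ) + 1) ^ s))
        = fun i => b * (p i * ((i : ℝ) + 1) ^ s) := by funext i; ring
    rw [this]
    exact hmom.mul_left b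
  have hsum_u2 : Summable (fun i => p i * Real.log Z) := hpsum.mul_right _
  have hsum_u3 : Summable (fun i => q i / Z - p i) :=
    (hqsum.div_const Z).sub hpsum
  have husum : Summable u := (hsum_u1.add hsum_u2).add hsum_u3
  have hfsum : Summable (fun i => -(p i * Real.log (p i))) :=
    Summable.of_nonneg_of_le hfnn hpoint husum
  -- sum the pointwise bound
  have htsum_u : ∑' i, u i = b * g + Real.log Z := by
    rw [hudef, Summable.tsum_add (hsum_u1.add hsum_u2) hsum_u3, Summable.tsum_add hsum_u1 hsum_u2]
    have e1 : ∑' i, p i * (b * ((i : ℝ) + 1) ^ s) = b * g := by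
      rw [hg, ← tsum_mul_left]
      congr 1; funext i; ring
    have e2 : ∑' i, p i * Real.log Z = Real.log Z := by
      rw [tsum_mul_right, hsum1, one_mul]
    have e3 : ∑' i, (q i / Z - p i) = 0 := by
      rw [Summable.tsum_sub (hqsum.div_const Z) hpsum, tsum_div_const, hsum1, ← hZdef,
        div_self (ne_of_gt hZ)]
      ring
    rw [e1, e2, e3, add_zero]
  have hmain : ∑' i, -(p i * Real.log (p i)) ≤ b * g + Real.log Z := by
    rw [← htsum_u]
    exact Summable.tsum_le_tsum hpoint hfsum husum
  have hbg : b * g = 1 / s := by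
    rw [hbdef]
    field_simp
  -- rewrite the LHS in terms of natural log
  have hLHS : (-∑' i : ℕ, p i * Real.logb 2 (p i))
      = (∑' i, -(p i * Real.log (p i))) / Real.log 2 := by
    have e : ∀ i : ℕ, p i * Real.logb 2 (p i) = (p i * Real.log (p i)) / Real.log 2 := by
      intro i
      rw [Real.logb]
      ring
    rw [tsum_congr e, tsum_div_const, tsum_neg, neg_div]
  -- identify the RHS
  have hstuff : (Real.exp (1 / s) / s) * s ^ (1 / s) * g ^ (1 / s) * Real.Gamma (1 / s)
      = Real.exp (1 / s) * I := by
    have hsg : ((s * g)⁻¹ : ℝ) ^ (-1 / s) = (s * g) ^ (1 / s) := by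
      rw [Real.inv_rpow (by positivity), ← Real.rpow_neg (by positivity)]
      congr 1
      ring
    rw [hIdef, Real.Gamma_add_one (by positivity), hbdef, one_div (s * g), hsg,
      Real.mul_rpow hs.le hgpos.le]
    ring
  have hRHS : Real.logb 2 ((Real.exp (1 / s) / s) * s ^ (1 / s) * g ^ (1 / s)
      * Real.Gamma (1 / s)) = (1 / s + Real.log I) / Real.log 2 := by
    rw [hstuff, Real.logb, Real.log_mul (Real.exp_ne_zero _) (ne_of_gt hI), Real.log_exp]
  rw [hLHS, hRHS]
  have hlog2 : (0 : ℝ) < Real.log 2 := Real.log_pos one_lt_two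
  have hchain : ∑' i, -(p i * Real.log (p i)) ≤ 1 / s + Real.log I :=
    calc ∑' i, -(p i * Real.log (p i)) ≤ b * g + Real.log Z := hmain
      _ = 1 / s + Real.log Z := by rw [hbg]
      _ ≤ 1 / s + Real.log I := by
          have := Real.log_le_log hZ hZI
          linarith
  gcongr
end
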